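/- Under the construction hypotheses (a distributive lattice D, groups G_α, and transitive isomorphisms φ_{α,β} for β ≤ α with ψ = φ^{-1}), the addition defined on S = Σ_{α∈D} G_α by (α,x)+(β,y) = (α+β, ψ_{α,α+β}(x)) is associative, so (S,+) is a semigroup. -/
import Mathlib


variable {D : Type*} [DistribLattice D] {G : D → Type*} [∀ α : D, Group (G α)]

/-- Multiplication on the disjoint union `S = Σ α, G α`:
`(α, x) · (β, y) = (αβ, φ_{α,αβ}(x) · φ_{β,αβ}(y))`. -/
def cMul (φ : ∀ α β : D, β ≤ α → (G α ≃* G β)) (s t : Σ α : D, G α) :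
    Σ α : D, G α :=
  ⟨s.1 ⊓ t.1,
    φ s.1 (s.1 ⊓ t.1) inf_le_left s.2 * φ t.1 (s.1 ⊓ t.1) inf_le_right t.2⟩

/-- Addition on the disjoint union `S = Σ α, G α`:
`(α, x) + (β, y) = (α + β, ψ_{α,α+β}(x))`, where `ψ_{β,α} = (φ_{α,β})⁻¹`
for `β ≤ α` (each `G α` carries the left-zero addition). -/
def cAdd (φ : ∀ α β : D, β ≤ α → (G α ≃* G β)) (s t : Σ α : D, G α) :
    Σ α : D, G α :=
  ⟨s.1 ⊔ t.1, (φ (s.1 ⊔ t.1) s.1 le_sup_left).symm s.2⟩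

lemma aux_sigma_congr (φ : ∀ α β : D, β ≤ α → (G α ≃* G β)) {a p q : D}
    (h : p = q) (hp : a ≤ p) (hq : a ≤ q) (x : G a) :
    (⟨p, (φ p a hp).symm x⟩ : Σ α : D, G α) = ⟨q, (φ q a hq).symm x⟩ := by
  subst h; rfl

/-- Under the construction hypotheses, the addition
`(α, x) + (β, y) = (α + β, ψ_{α,α+β}(x))` on `S = Σ α, G α` is associative,
so `(S, +)` is a semigroup. -/
theorem construction_add_assoc
    (φ : ∀ α β : D, β ≤ α → (G α ≃* G β))
    (hφ_id : ∀ (α : D) (x : G α), φ α α le_rfl x = x)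
    (hφ_trans : ∀ {α β γ : D} (h1 : γ ≤ β) (h2 : β ≤ α) (x : G α),
      φ β γ h1 (φ α β h2 x) = φ α γ (h1.trans h2) x)
    (s t u : Σ α : D, G α) :
    cAdd φ (cAdd φ s t) u = cAdd φ s (cAdd φ t u) := by
  obtain ⟨a, x⟩ := s; obtain ⟨b, y⟩ := t; obtain ⟨c, z⟩ := u
  have key : ∀ {p q : D} (h1 : p ≤ q) (h2 : a ≤ p) (x : G a),
      (φ q p h1).symm ((φ p a h2).symm x) = (φ q a (h2.trans h1)).symm x := by
    intro p q h1 h2 x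
    apply (φ q a (h2.trans h1)).injective
    rw [MulEquiv.apply_symm_apply, ← hφ_trans h2 h1, MulEquiv.apply_symm_apply,
      MulEquiv.apply_symm_apply]
  show (⟨(a ⊔ b) ⊔ c, (φ ((a ⊔ b) ⊔ c) (a ⊔ b) le_sup_left).symm
      ((φ (a ⊔ b) a le_sup_left).symm x)⟩ : Σ α : D, G α) = _
  rw [key]
  have hsup : (a ⊔ b) ⊔ c = a ⊔ (b ⊔ c) := sup_assoc a b c
  exact aux_sigma_congr φ hsup _ _ x
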